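/- arXiv:math/0108012 — 2 statements merged into one kernel-verified Lean document; each statement's English description precedes it below -/
import Mathlib

section
/- For every integer k with 0 ≤ k < N and all λ, y ∈ ℝⁿ, the alternating sum Σ_{g∈G} ε(g) ⟨gλ, y⟩^k equals 0. -/
open Matrix Finset

noncomputable section

abbrev OG (n : ℕ) := ↥(Matrix.orthogonalGroup (Fin n) ℝ)

def mOf {n : ℕ} {G : Subgroup (OG n)} (g : G) : Matrix (Fin n) (Fin n) ℝ :=
  ((g : OG n) : Matrix (Fin n) (Fin n) ℝ)

/-- `M` is the orthogonal reflection with normal vector `v`. -/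
def IsReflWith {n : ℕ} (M : Matrix (Fin n) (Fin n) ℝ) (v : Fin n → ℝ) : Prop :=
  v ≠ 0 ∧ ∀ x : Fin n → ℝ, M.mulVec x = x - (2 * (v ⬝ᵥ x) / (v ⬝ᵥ v)) • v

/-- The complement of the reflection hyperplanes. -/
def OmegaSet {n : ℕ} {G : Subgroup (OG n)} (A : Finset G) (α : G → Fin n → ℝ) :
    Set (Fin n → ℝ) := {x | ∀ s ∈ A, α s ⬝ᵥ x ≠ 0}

lemma IsReflWith.det_eq {n : ℕ} {M : Matrix (Fin n) (Fin n) ℝ} {v : Fin n → ℝ}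
    (h : IsReflWith M v) : M.det = -1 := by
  obtain ⟨hv, hM⟩ := h
  have hvv : v ⬝ᵥ v ≠ 0 := fun h0 => hv (dotProduct_self_eq_zero.mp h0)
  have hMeq : M = 1 + replicateCol Unit ((-2 / (v ⬝ᵥ v)) • v) * replicateRow Unit v := by
    rw [← vecMulVec_eq]
    ext i j
    have := congrFun (hM (Pi.single j 1)) i
    rw [mulVec_single_one] at this
    simp only [Matrix.col_apply] at this
    rw [this]
    simp only [Matrix.add_apply, Matrix.one_apply, vecMulVec_apply, Pi.smul_apply,
      smul_eq_mul, Pi.sub_apply, Pi.single_apply, dotProduct_single, mul_one]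
    by_cases hij : i = j <;> simp [hij] <;> ring
  rw [hMeq, det_one_add_replicateCol_mul_replicateRow]
  rw [dotProduct_smul]
  field_simp
  ring_nf
  rw [mul_inv_cancel₀ hvv]
  norm_num

lemma mOf_mul {n : ℕ} {G : Subgroup (OG n)} (g h : G) : mOf (g * h) = mOf g * mOf h := rfl

lemma mOf_inj {n : ℕ} {G : Subgroup (OG n)} {g h : G} (e : mOf g = mOf h) : g = h :=
  Subtype.ext (Subtype.ext e)

lemma sum_vanish {n : ℕ} {G : Subgroup (OG n)} [Fintype G] {A : Finset G} {α : G → Fin n → ℝ}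
    (hrefl : ∀ s ∈ A, IsReflWith (mOf s) (α s)) (k : ℕ) (y : Fin n → ℝ)
    {s : G} (hs : s ∈ A) {x : Fin n → ℝ} (hx : α s ⬝ᵥ x = 0) :
    ∑ g : G, (mOf g).det * ((mOf g).mulVec x ⬝ᵥ y) ^ k = 0 := by
  have hfix : (mOf s) *ᵥ x = x := by
    rw [(hrefl s hs).2 x, hx]; simp
  have key : ∑ g : G, (mOf g).det * ((mOf g).mulVec x ⬝ᵥ y) ^ k
      = -∑ g : G, (mOf g).det * ((mOf g).mulVec x ⬝ᵥ y) ^ k := by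
    nth_rewrite 1 [← Fintype.sum_equiv (Equiv.mulRight s)
      (fun g => (mOf (g * s)).det * ((mOf (g * s)).mulVec x ⬝ᵥ y) ^ k)
      (fun g => (mOf g).det * ((mOf g).mulVec x ⬝ᵥ y) ^ k) (fun g => rfl)]
    rw [← Finset.sum_neg_distrib]
    refine Finset.sum_congr rfl fun g _ => ?_
    rw [mOf_mul, det_mul, (hrefl s hs).det_eq, ← mulVec_mulVec, hfix]
    ring
  linarith

lemma refl_eq_of_smul {n : ℕ} {M N : Matrix (Fin n) (Fin n) ℝ} {v w : Fin n → ℝ}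
    (hM : IsReflWith M v) (hN : IsReflWith N w) {c : ℝ} (hc : c ≠ 0) (hw : w = c • v) :
    M = N := by
  have hvv : v ⬝ᵥ v ≠ 0 := fun h0 => hM.1 (dotProduct_self_eq_zero.mp h0)
  have h : ∀ x, M *ᵥ x = N *ᵥ x := by
    intro x
    rw [hM.2 x, hN.2 x, hw]
    rw [smul_dotProduct, smul_dotProduct, dotProduct_smul, smul_smul]
    congr 2
    field_simp
    ring
  ext i j
  have h2 := h (Pi.single j 1)
  rw [mulVec_single_one, mulVec_single_one] at h2
  exact congrFun h2 i

lemma exists_avoid {n : ℕ} {ι : Type*} (S : Finset ι) (v : ι → Fin n → ℝ)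
    (hv : ∀ i ∈ S, v i ≠ 0) : ∃ μ : Fin n → ℝ, ∀ i ∈ S, v i ⬝ᵥ μ ≠ 0 := by
  classical
  let L : ι → ((Fin n → ℝ) →ₗ[ℝ] ℝ) := fun i =>
    { toFun := fun x => v i ⬝ᵥ x
      map_add' := fun a b => dotProduct_add _ _ _
      map_smul' := fun c a => by simp [dotProduct_smul] }
  let s : Finset (Subspace ℝ (Fin n → ℝ)) := S.image fun i => LinearMap.ker (L i)
  have htop : ⊤ ∉ s := by
    simp only [s, Finset.mem_image, not_exists]
    rintro i ⟨hi, h⟩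
    have : v i ⬝ᵥ v i = 0 := by
      have : v i ∈ LinearMap.ker (L i) := h ▸ Submodule.mem_top
      simpa [L] using this
    exact hv i hi (dotProduct_self_eq_zero.mp this)
  have hne := Subspace.biUnion_ne_univ_of_top_notMem htop
  obtain ⟨μ, hμ⟩ := Set.ne_univ_iff_exists_notMem _ |>.mp hne
  refine ⟨μ, fun i hi h0 => hμ ?_⟩
  refine Set.mem_biUnion (Finset.mem_image_of_mem _ hi) ?_
  simpa [L] using h0

/-- For `0 ≤ k < N`, the alternating sum `Σ_{g∈G} ε(g) ⟨gλ,y⟩^k` vanishes. -/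
theorem alternating_sum_pow_lt_card_eq_zero
    (n : ℕ) (hn : 1 ≤ n) (G : Subgroup (OG n)) [Fintype G]
    (A : Finset G) (α : G → Fin n → ℝ)
    (hA : ∀ s : G, s ∈ A ↔ ∃ v : Fin n → ℝ, IsReflWith (mOf s) v)
    (hrefl : ∀ s ∈ A, IsReflWith (mOf s) (α s))
    (hgen : Subgroup.closure (A : Set G) = ⊤)
    (k : ℕ) (hk : k < A.card) (l y : Fin n → ℝ) :
    ∑ g : G, (mOf g).det * ((mOf g).mulVec l ⬝ᵥ y) ^ k = 0 := by
  classical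
  by_cases hc : ∃ s ∈ A, α s ⬝ᵥ l = 0
  · obtain ⟨s, hs, h0⟩ := hc
    exact sum_vanish hrefl k y hs h0
  push_neg at hc
  -- choose a generic direction μ
  set S : Finset (G ⊕ G × G) :=
    A.disjSum (((A ×ˢ A)).filter fun p => p.1 ≠ p.2) with hS
  set v : (G ⊕ G × G) → Fin n → ℝ :=
    Sum.elim α (fun p => (α p.1 ⬝ᵥ l) • α p.2 - (α p.2 ⬝ᵥ l) • α p.1) with hv'
  have hv : ∀ i ∈ S, v i ≠ 0 := by
    rintro (s | ⟨s, t⟩) hi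
    · exact (hrefl s (Finset.inl_mem_disjSum.mp hi)).1
    · have hm := Finset.inr_mem_disjSum.mp hi
      rw [Finset.mem_filter, Finset.mem_product] at hm
      obtain ⟨⟨hsA, htA⟩, hst⟩ := hm
      intro h0
      have has := hc s hsA
      have hat := hc t htA
      have heq : (α s ⬝ᵥ l) • α t = (α t ⬝ᵥ l) • α s := by
        have := sub_eq_zero.mp h0
        simpa [v] using this
      have hαt : α t = ((α t ⬝ᵥ l) / (α s ⬝ᵥ l)) • α s := by
        rw [div_eq_mul_inv, mul_comm, ← smul_smul, ← heq, smul_smul, inv_mul_cancel₀ has, one_smul]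
      have := refl_eq_of_smul (hrefl s hsA) (hrefl t htA)
        (div_ne_zero hat has) hαt
      exact hst (mOf_inj this)
  obtain ⟨μ, hμ⟩ := exists_avoid S v hv
  have hαμ : ∀ s ∈ A, α s ⬝ᵥ μ ≠ 0 := by
    intro s hs
    have := hμ (Sum.inl s) (Finset.inl_mem_disjSum.mpr hs)
    simpa [v] using this
  set a : G → ℝ := fun g => (mOf g).mulVec l ⬝ᵥ y with ha
  set b : G → ℝ := fun g => (mOf g).mulVec μ ⬝ᵥ y with hb
  set q : Polynomial ℝ := ∑ g : G,
    Polynomial.C ((mOf g).det) * (Polynomial.C (a g) + Polynomial.C (b g) * Polynomial.X) ^ k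
    with hq
  have heval : ∀ t : ℝ, q.eval t = ∑ g : G, (mOf g).det * ((mOf g).mulVec (l + t • μ) ⬝ᵥ y) ^ k := by
    intro t
    rw [hq, Polynomial.eval_finset_sum]
    refine Finset.sum_congr rfl fun g _ => ?_
    rw [mulVec_add, mulVec_smul, add_dotProduct, smul_dotProduct]
    simp only [Polynomial.eval_mul, Polynomial.eval_pow, Polynomial.eval_add, Polynomial.eval_C,
      Polynomial.eval_X, smul_eq_mul, ha, hb]
    ring
  have hdeg : q.natDegree ≤ k := by
    refine Polynomial.natDegree_sum_le_of_forall_le _ _ fun g _ => ?_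
    calc (Polynomial.C ((mOf g).det) *
          (Polynomial.C (a g) + Polynomial.C (b g) * Polynomial.X) ^ k).natDegree
        ≤ ((Polynomial.C (a g) + Polynomial.C (b g) * Polynomial.X) ^ k).natDegree :=
          Polynomial.natDegree_C_mul_le _ _
      _ ≤ k * (Polynomial.C (a g) + Polynomial.C (b g) * Polynomial.X).natDegree :=
          Polynomial.natDegree_pow_le
      _ ≤ k * 1 := by
          refine Nat.mul_le_mul_left _ ?_
          refine (Polynomial.natDegree_add_le _ _).trans ?_
          simp only [Polynomial.natDegree_C, max_le_iff]
          exact ⟨Nat.zero_le _, (Polynomial.natDegree_C_mul_le _ _).trans (by simp)⟩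
      _ = k := Nat.mul_one k
  set r : G → ℝ := fun s => -(α s ⬝ᵥ l) / (α s ⬝ᵥ μ) with hr
  have hinj : Set.InjOn r ↑A := by
    intro s hs t ht he
    by_contra hst
    have hmem : Sum.inr (s, t) ∈ S := by
      rw [hS]
      refine Finset.inr_mem_disjSum.mpr ?_
      rw [Finset.mem_filter, Finset.mem_product]
      exact ⟨⟨hs, ht⟩, hst⟩
    have hne := hμ _ hmem
    apply hne
    have hbs := hαμ s hs
    have hbt := hαμ t ht
    rw [hr] at he
    simp only [v, Sum.elim_inr, sub_dotProduct, smul_dotProduct, smul_eq_mul]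
    field_simp at he
    linear_combination -he
  have hq0 : q = 0 := by
    refine Polynomial.eq_zero_of_natDegree_lt_card_of_eval_eq_zero' q (A.image r) ?_ ?_
    · intro ρ hρ
      obtain ⟨s, hs, rfl⟩ := Finset.mem_image.mp hρ
      rw [heval]
      refine sum_vanish hrefl k y hs ?_
      rw [dotProduct_add, dotProduct_smul, hr]
      have := hαμ s hs
      simp only [smul_eq_mul, neg_div, neg_mul, div_mul_cancel₀ _ this, add_neg_cancel]
    · rw [Finset.card_image_of_injOn hinj]
      exact lt_of_le_of_lt hdeg hk
  have h0 := heval 0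
  rw [hq0] at h0
  simpa using h0.symm
end
end

section
/- Let λ ∈ ℂⁿ satisfy ⟨α_s, λ⟩ ≠ 0 for every reflection s ∈ A (complex-bilinear extension of the inner product). Then the ideal I(λ) generated by the G-invariant polynomials vanishing at λ coincides with the vanishing ideal of the orbit of λ: I(λ) = {p ∈ S : p(gλ) = 0 for all g ∈ G}. -/
open Matrix Finset

noncomputable section

/-- The action of `g ∈ G` on polynomials: `(g • p)(x) = p(g⁻¹ x)`. -/
def actA {n : ℕ} {G : Subgroup (OG n)} (g : G) :
    MvPolynomial (Fin n) ℂ →ₐ[ℂ] MvPolynomial (Fin n) ℂ :=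
  MvPolynomial.aeval (fun i => ∑ j, MvPolynomial.C (((mOf g⁻¹) i j : ℝ) : ℂ) * MvPolynomial.X j)

/-- The constant coefficient differential operator `p(∂)`. -/
def diffOp {n : ℕ} (p : MvPolynomial (Fin n) ℂ) :
    Module.End ℂ (MvPolynomial (Fin n) ℂ) :=
  (AddMonoidAlgebra.coeff p).sum fun k c => c •
    (List.ofFn fun i : Fin n =>
      (((MvPolynomial.pderiv i).toLinearMap : Module.End ℂ (MvPolynomial (Fin n) ℂ)) ^ (k i))).prod

/-- The space of harmonic polynomials. -/
def H0sub (n : ℕ) (G : Subgroup (OG n)) : Submodule ℂ (MvPolynomial (Fin n) ℂ) where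
  carrier := {h | ∀ p : MvPolynomial (Fin n) ℂ,
    (∀ g : G, actA g p = p) → MvPolynomial.eval (0 : Fin n → ℂ) p = 0 → diffOp p h = 0}
  add_mem' := fun ha hb p h1 h2 => by
    rw [map_add, ha p h1 h2, hb p h1 h2, add_zero]
  zero_mem' := fun p h1 h2 => map_zero _
  smul_mem' := fun c x hx p h1 h2 => by
    rw [LinearMap.map_smul, hx p h1 h2, smul_zero]

/-- The ideal `I(λ)` generated by the invariant polynomials vanishing at `λ`. -/
def Iid (n : ℕ) (G : Subgroup (OG n)) (l : Fin n → ℂ) : Ideal (MvPolynomial (Fin n) ℂ) :=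
  Ideal.span {p | (∀ g : G, actA g p = p) ∧ MvPolynomial.eval l p = 0}
/-- The complexification of the matrix of `g`. -/
def cMat {n : ℕ} {G : Subgroup (OG n)} (g : G) : Matrix (Fin n) (Fin n) ℂ :=
  (mOf g).map (fun r : ℝ => (r : ℂ))

section Lemmas
open MvPolynomial
variable {n : ℕ} {G : Subgroup (OG n)}

def cv (v : Fin n → ℝ) : Fin n → ℂ := fun i => (v i : ℂ)

lemma mOf_mul_s8 (a b : G) : mOf (a * b) = mOf a * mOf b := rfl
lemma mOf_one : mOf (1 : G) = 1 := rfl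
lemma mOf_inv_mul (a : G) : mOf a⁻¹ * mOf a = 1 := by
  rw [← mOf_mul_s8, inv_mul_cancel, mOf_one]
lemma mOf_mul_inv (a : G) : mOf a * mOf a⁻¹ = 1 := by
  rw [← mOf_mul_s8, mul_inv_cancel, mOf_one]
lemma mOf_transpose (a : G) : (mOf a)ᵀ = mOf a⁻¹ := by
  have h : (mOf a)ᵀ * mOf a = 1 := by
    have := (a : OG n).2
    rw [Matrix.mem_orthogonalGroup_iff'] at this
    exact this
  calc (mOf a)ᵀ = (mOf a)ᵀ * (mOf a * mOf a⁻¹) := by rw [mOf_mul_inv, mul_one]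
    _ = ((mOf a)ᵀ * mOf a) * mOf a⁻¹ := by rw [mul_assoc]
    _ = mOf a⁻¹ := by rw [h, one_mul]

lemma cMat_mul (a b : G) : cMat (a * b) = cMat a * cMat b := by
  unfold cMat
  rw [mOf_mul_s8]
  ext i j
  simp [Matrix.map_apply, Matrix.mul_apply]
lemma cMat_one : cMat (1 : G) = 1 := by
  unfold cMat; rw [mOf_one]
  ext i j
  simp [Matrix.map_apply, Matrix.one_apply]
  split <;> simp
lemma cMat_inv_mul (a : G) : cMat a⁻¹ * cMat a = 1 := by
  rw [← cMat_mul, inv_mul_cancel, cMat_one]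
lemma cMat_mul_inv (a : G) : cMat a * cMat a⁻¹ = 1 := by
  rw [← cMat_mul, mul_inv_cancel, cMat_one]
lemma cMat_transpose (a : G) : (cMat a)ᵀ = cMat a⁻¹ := by
  unfold cMat
  rw [← mOf_transpose]
  exact (Matrix.transpose_map).symm

lemma map_mulVec_cv (M : Matrix (Fin n) (Fin n) ℝ) (v : Fin n → ℝ) :
    (M.map (fun r : ℝ => (r : ℂ))) *ᵥ cv v = cv (M *ᵥ v) := by
  funext i
  simp only [Matrix.mulVec, dotProduct, Matrix.map_apply, cv]
  push_cast
  rfl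
end Lemmas
section Lemmas2
open MvPolynomial
variable {n : ℕ} {G : Subgroup (OG n)}

lemma eval_aeval' (x : Fin n → ℂ) (f : Fin n → MvPolynomial (Fin n) ℂ)
    (p : MvPolynomial (Fin n) ℂ) :
    eval x (aeval f p) = eval (fun i => eval x (f i)) p := by
  induction p using MvPolynomial.induction_on with
  | C c => simp only [aeval_C, algebraMap_eq, eval_C]
  | add p q hp hq => simp only [map_add, hp, hq]
  | mul_X p i hp => simp only [_root_.map_mul, aeval_X, hp, eval_X]

lemma aeval_aeval' (f g : Fin n → MvPolynomial (Fin n) ℂ) (p : MvPolynomial (Fin n) ℂ) :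
    aeval f (aeval g p) = aeval (fun i => aeval f (g i)) p := by
  induction p using MvPolynomial.induction_on with
  | C c => simp only [aeval_C, algebraMap_eq]
  | add p q hp hq => simp only [map_add, hp, hq]
  | mul_X p i hp => simp only [_root_.map_mul, aeval_X, hp]

lemma eval_actA (g : G) (x : Fin n → ℂ) (p : MvPolynomial (Fin n) ℂ) :
    eval x (actA g p) = eval ((cMat g⁻¹) *ᵥ x) p := by
  have hpt : (fun i => eval x (∑ j, MvPolynomial.C (((mOf g⁻¹) i j : ℝ) : ℂ) * MvPolynomial.X j))
      = (cMat g⁻¹) *ᵥ x := by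
    funext i
    simp [Matrix.mulVec, dotProduct, cMat, Matrix.map_apply]
  rw [actA, eval_aeval', hpt]

lemma actA_one (p : MvPolynomial (Fin n) ℂ) : actA (1 : G) p = p := by
  rw [actA]
  have : (fun i => ∑ j, MvPolynomial.C (((mOf (1:G)⁻¹) i j : ℝ) : ℂ) * MvPolynomial.X j)
      = (X : Fin n → MvPolynomial (Fin n) ℂ) := by
    funext i
    rw [inv_one, mOf_one]
    simp [Matrix.one_apply, apply_ite (fun r : ℝ => (r : ℂ)), ite_mul, Finset.sum_ite_eq]
  rw [this, aeval_X_left_apply]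

lemma actA_mul (a b : G) (p : MvPolynomial (Fin n) ℂ) :
    actA (a * b) p = actA a (actA b p) := by
  rw [actA, actA, actA, aeval_aeval']
  have hfun : (fun i => (aeval fun i => ∑ j, MvPolynomial.C (((mOf a⁻¹) i j : ℝ) : ℂ) * MvPolynomial.X j)
        (∑ j, MvPolynomial.C (((mOf b⁻¹) i j : ℝ) : ℂ) * MvPolynomial.X j))
      = (fun i => ∑ j, MvPolynomial.C (((mOf (a*b)⁻¹) i j : ℝ) : ℂ) * MvPolynomial.X j) := by
    funext i
    rw [map_sum]
    have : ∀ j, (aeval fun i => ∑ j, MvPolynomial.C (((mOf a⁻¹) i j : ℝ) : ℂ) * MvPolynomial.X j)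
        (MvPolynomial.C (((mOf b⁻¹) i j : ℝ) : ℂ) * MvPolynomial.X j)
        = ∑ k, MvPolynomial.C ((mOf b⁻¹ i j : ℝ) : ℂ) * (MvPolynomial.C ((mOf a⁻¹ j k : ℝ) : ℂ) * MvPolynomial.X k) := by
      intro j
      rw [_root_.map_mul, aeval_C, aeval_X, Finset.mul_sum]
      simp [algebraMap_eq]
    rw [Finset.sum_congr rfl (fun j _ => this j), Finset.sum_comm]
    have hinv : mOf (a * b)⁻¹ = mOf b⁻¹ * mOf a⁻¹ := by
      rw [_root_.mul_inv_rev, mOf_mul_s8]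
    rw [hinv]
    refine Finset.sum_congr rfl (fun k _ => ?_)
    rw [Matrix.mul_apply]
    push_cast
    rw [map_sum, Finset.sum_mul]
    refine Finset.sum_congr rfl (fun j _ => ?_)
    rw [_root_.map_mul, mul_assoc]
  rw [hfun]

lemma actA_mem_Iid (l : Fin n → ℂ) (g : G) {q : MvPolynomial (Fin n) ℂ}
    (hq : q ∈ Iid n G l) : actA g q ∈ Iid n G l := by
  have h : Iid n G l ≤ Ideal.comap (actA g : MvPolynomial (Fin n) ℂ →ₐ[ℂ] MvPolynomial (Fin n) ℂ).toRingHom (Iid n G l) := by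
    rw [Iid, Ideal.span_le]
    intro q hq
    simp only [SetLike.mem_coe, Ideal.mem_comap, AlgHom.toRingHom_eq_coe, RingHom.coe_coe]
    rw [hq.1 g]
    rw [Iid] at *
    exact Ideal.subset_span hq
  exact Ideal.mem_comap.mp (h hq)
end Lemmas2
section Lemmas3
open MvPolynomial
variable {n : ℕ}

lemma totalDegree_aeval_le (f : Fin n → MvPolynomial (Fin n) ℂ)
    (hf : ∀ i, (f i).totalDegree ≤ 1) (p : MvPolynomial (Fin n) ℂ) :
    (aeval f p).totalDegree ≤ p.totalDegree := by
  rw [aeval_def, eval₂_eq]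
  refine le_trans (totalDegree_finset_sum _ _) (Finset.sup_le fun d hd => ?_)
  refine le_trans (totalDegree_mul _ _) ?_
  have h1 : (algebraMap ℂ (MvPolynomial (Fin n) ℂ) (coeff d p)).totalDegree = 0 := by
    rw [algebraMap_eq]; exact totalDegree_C _
  rw [h1, zero_add]
  refine le_trans (totalDegree_finset_prod _ _) ?_
  refine le_trans (Finset.sum_le_sum (fun i _ => le_trans (totalDegree_pow _ _)
    (Nat.mul_le_mul_left (d i) (hf i)))) ?_
  simp only [mul_one]
  calc ∑ i ∈ d.support, d i = d.sum fun _ e => e := rfl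
    _ ≤ p.totalDegree := le_totalDegree hd

lemma totalDegree_X_mul_ge {i0 : Fin n} {h : MvPolynomial (Fin n) ℂ} (hh : h ≠ 0) :
    h.totalDegree + 1 ≤ (X i0 * h).totalDegree := by
  obtain ⟨m, hm, hms⟩ := Finset.exists_mem_eq_sup h.support (support_nonempty.mpr hh)
    (fun s => s.sum fun _ e => e)
  have hmem : Finsupp.single i0 1 + m ∈ (X i0 * h).support := by
    rw [mem_support_iff, coeff_X_mul]
    exact mem_support_iff.mp hm
  have := le_totalDegree hmem
  rw [Finsupp.sum_add_index' (fun _ => rfl) (fun _ _ _ => rfl)] at this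
  rw [Finsupp.sum_single_index rfl] at this
  calc h.totalDegree + 1 = 1 + (m.sum fun _ e => e) := by rw [← hms, totalDegree, add_comm]
    _ ≤ _ := this

lemma X_dvd_sub_aeval (i0 : Fin n) (r : MvPolynomial (Fin n) ℂ) :
    X i0 ∣ (r - aeval (@Function.update (Fin n) (fun _ => MvPolynomial (Fin n) ℂ) _ X i0 0) r) := by
  induction r using MvPolynomial.induction_on' with
  | add p q hp hq =>
    have : (p + q) - aeval (@Function.update (Fin n) (fun _ => MvPolynomial (Fin n) ℂ) _ X i0 0) (p + q)
        = (p - aeval (@Function.update (Fin n) (fun _ => MvPolynomial (Fin n) ℂ) _ X i0 0) p) + (q - aeval (@Function.update (Fin n) (fun _ => MvPolynomial (Fin n) ℂ) _ X i0 0) q) := by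
      rw [map_add]; ring
    rw [this]; exact dvd_add hp hq
  | monomial u a =>
    by_cases h : u i0 = 0
    · have : aeval (@Function.update (Fin n) (fun _ => MvPolynomial (Fin n) ℂ) _ X i0 0) (monomial u a) = monomial u a := by
        rw [aeval_monomial, monomial_eq]
        congr 1
        refine Finsupp.prod_congr (fun j hj => ?_)
        have hji : j ≠ i0 := by
          intro e; subst e; exact (Finsupp.mem_support_iff.mp hj) h
        rw [Function.update_of_ne hji]
      rw [this, sub_self]
      exact dvd_zero _
    · have : aeval (@Function.update (Fin n) (fun _ => MvPolynomial (Fin n) ℂ) _ X i0 0) (monomial u a) = 0 := by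
        rw [aeval_monomial]
        have hz : (u.prod fun i e =>
            @Function.update (Fin n) (fun _ => MvPolynomial (Fin n) ℂ) _ X i0 0 i ^ e) = 0 := by
          apply Finset.prod_eq_zero (Finsupp.mem_support_iff.mpr h)
          show Function.update X i0 0 i0 ^ u i0 = 0
          rw [Function.update_self, zero_pow h]
        rw [hz, mul_zero]
      rw [this, sub_zero]
      exact X_dvd_monomial.mpr (Or.inr h)

lemma X_dvd_of_vanish (i0 : Fin n) (r : MvPolynomial (Fin n) ℂ)
    (hr : ∀ x : Fin n → ℂ, x i0 = 0 → eval x r = 0) : X i0 ∣ r := by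
  have h0 : aeval (@Function.update (Fin n) (fun _ => MvPolynomial (Fin n) ℂ) _ X i0 0) r = 0 := by
    apply MvPolynomial.funext
    intro x
    rw [eval_aeval', (eval x).map_zero]
    have : (fun i => eval x (@Function.update (Fin n) (fun _ => MvPolynomial (Fin n) ℂ) _ X i0 0 i))
        = Function.update x i0 0 := by
      funext j
      by_cases hj : j = i0
      · subst hj; rw [Function.update_self, Function.update_self, map_zero]
      · rw [Function.update_of_ne hj, Function.update_of_ne hj, eval_X]
    rw [this]
    exact hr _ (Function.update_self _ _ _)
  have := X_dvd_sub_aeval i0 r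
  rwa [h0, sub_zero] at this

lemma totalDegree_linear_le (v : Fin n → ℂ) :
    (∑ j, C (v j) * X j : MvPolynomial (Fin n) ℂ).totalDegree ≤ 1 := by
  refine le_trans (totalDegree_finset_sum _ _) (Finset.sup_le fun j _ => ?_)
  refine le_trans (totalDegree_mul _ _) ?_
  rw [totalDegree_C, totalDegree_X, zero_add]
end Lemmas3
section Lemmas4
open MvPolynomial
variable {n : ℕ}

lemma lin_dvd (v : Fin n → ℂ) (i0 : Fin n) (hv : v i0 ≠ 0)
    (q : MvPolynomial (Fin n) ℂ) (hq : ∀ x, v ⬝ᵥ x = 0 → eval x q = 0) :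
    ∃ h, q = (∑ j, C (v j) * X j) * h ∧ (q ≠ 0 → h.totalDegree < q.totalDegree) := by
  classical
  set L := (∑ j, C (v j) * X j : MvPolynomial (Fin n) ℂ) with hLdef
  set T := (∑ j ∈ Finset.univ.erase i0, C (v j) * X j : MvPolynomial (Fin n) ℂ) with hTdef
  have hLT : L = C (v i0) * X i0 + T :=
    (Finset.add_sum_erase _ (fun j => C (v j) * X j) (Finset.mem_univ i0)).symm
  set f := Function.update (X : Fin n → MvPolynomial (Fin n) ℂ) i0 (C (v i0)⁻¹ * (X i0 - T))
    with hfdef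
  set g := Function.update (X : Fin n → MvPolynomial (Fin n) ℂ) i0 L with hgdef
  have hfi0 : f i0 = C (v i0)⁻¹ * (X i0 - T) := by rw [hfdef, Function.update_self]
  have hfj : ∀ j, j ≠ i0 → f j = X j := by
    intro j hj; rw [hfdef, Function.update_of_ne hj]
  have hgi0 : g i0 = L := by rw [hgdef, Function.update_self]
  have hgj : ∀ j, j ≠ i0 → g j = X j := by
    intro j hj; rw [hgdef, Function.update_of_ne hj]
  have hgT : aeval g T = T := by
    rw [hTdef, map_sum]
    refine Finset.sum_congr rfl (fun j hj => ?_)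
    rw [_root_.map_mul, aeval_C, aeval_X, hgj j (Finset.ne_of_mem_erase hj), algebraMap_eq]
  have hgf : ∀ i, aeval g (f i) = X i := by
    intro i
    by_cases hi : i = i0
    · subst hi
      rw [hfi0, _root_.map_mul, aeval_C, map_sub, aeval_X, hgi0, hgT, hLT, algebraMap_eq,
        add_sub_cancel_right, ← mul_assoc, ← _root_.map_mul, inv_mul_cancel₀ hv, MvPolynomial.C_1, one_mul]
    · rw [hfj i hi, aeval_X, hgj i hi]
  have hcomp : ∀ r : MvPolynomial (Fin n) ℂ, aeval g (aeval f r) = r := by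
    intro r
    rw [aeval_aeval']
    have : (fun i => aeval g (f i)) = (X : Fin n → MvPolynomial (Fin n) ℂ) := by
      funext i; exact hgf i
    rw [this, aeval_X_left_apply]
  have hdegT : T.totalDegree ≤ 1 := by
    rw [hTdef]
    refine le_trans (totalDegree_finset_sum _ _) (Finset.sup_le fun j _ => ?_)
    refine le_trans (totalDegree_mul _ _) ?_
    rw [totalDegree_C, totalDegree_X, zero_add]
  have hdegf : ∀ i, (f i).totalDegree ≤ 1 := by
    intro i
    by_cases hi : i = i0
    · subst hi
      rw [hfi0]
      refine le_trans (totalDegree_mul _ _) ?_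
      rw [totalDegree_C, zero_add]
      refine le_trans (totalDegree_sub _ _) ?_
      rw [totalDegree_X]
      exact max_le le_rfl hdegT
    · rw [hfj i hi, totalDegree_X]
  have hdegg : ∀ i, (g i).totalDegree ≤ 1 := by
    intro i
    by_cases hi : i = i0
    · subst hi; rw [hgi0, hLdef]; exact totalDegree_linear_le v
    · rw [hgj i hi, totalDegree_X]
  have hvan : ∀ x : Fin n → ℂ, x i0 = 0 → eval x (aeval f q) = 0 := by
    intro x hx
    rw [eval_aeval']
    set y := fun i => eval x (f i) with hy
    apply hq
    have hevT : eval x T = ∑ j ∈ Finset.univ.erase i0, v j * x j := by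
      rw [hTdef, map_sum]
      exact Finset.sum_congr rfl (fun j _ => by rw [_root_.map_mul, eval_C, eval_X])
    have hyj : ∀ j, j ≠ i0 → y j = x j := by
      intro j hj; rw [hy]; show eval x (f j) = x j; rw [hfj j hj, eval_X]
    have hyi : y i0 = (v i0)⁻¹ * (0 - eval x T) := by
      rw [hy]; show eval x (f i0) = _
      rw [hfi0, _root_.map_mul, eval_C, map_sub, eval_X, hx]
    calc v ⬝ᵥ y = v i0 * y i0 + ∑ j ∈ Finset.univ.erase i0, v j * y j :=
          (Finset.add_sum_erase _ (fun j => v j * y j) (Finset.mem_univ i0)).symm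
      _ = v i0 * ((v i0)⁻¹ * (0 - eval x T)) + ∑ j ∈ Finset.univ.erase i0, v j * x j := by
          rw [hyi]
          congr 1
          exact Finset.sum_congr rfl (fun j hj => by rw [hyj j (Finset.ne_of_mem_erase hj)])
      _ = 0 := by rw [← hevT, ← mul_assoc, mul_inv_cancel₀ hv, one_mul]; ring
  obtain ⟨h', hh'⟩ := X_dvd_of_vanish i0 (aeval f q) hvan
  refine ⟨aeval g h', ?_, ?_⟩
  · calc q = aeval g (aeval f q) := (hcomp q).symm
      _ = aeval g (X i0 * h') := by rw [← hh']
      _ = L * aeval g h' := by rw [_root_.map_mul, aeval_X, hgi0]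
  · intro hq0
    have hne : h' ≠ 0 := by
      rintro rfl
      apply hq0
      rw [← hcomp q, hh', mul_zero, map_zero]
    have h1 : (aeval f q).totalDegree = q.totalDegree := by
      refine le_antisymm (totalDegree_aeval_le f hdegf q) ?_
      calc q.totalDegree = (aeval g (aeval f q)).totalDegree := by rw [hcomp]
        _ ≤ (aeval f q).totalDegree := totalDegree_aeval_le g hdegg _
    have h2 := totalDegree_X_mul_ge (i0 := i0) hne
    rw [← hh', h1] at h2
    have h3 : (aeval g h').totalDegree ≤ h'.totalDegree := totalDegree_aeval_le g hdegg h'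
    omega
end Lemmas4
section Lemmas5
open MvPolynomial
variable {n : ℕ} {G : Subgroup (OG n)}

lemma refl_dot_ne {v : Fin n → ℝ} (hv : v ≠ 0) : v ⬝ᵥ v ≠ 0 :=
  fun h => hv (dotProduct_self_eq_zero.mp h)

lemma refl_entries {M : Matrix (Fin n) (Fin n) ℝ} {v : Fin n → ℝ} (h : IsReflWith M v)
    (i j : Fin n) : M i j = (if i = j then 1 else 0) - 2 * v i * v j / (v ⬝ᵥ v) := by
  have h1 := congrFun (h.2 (Pi.single j 1)) i
  have hl : (M *ᵥ Pi.single j 1) i = M i j := by simp [Matrix.mulVec_single]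
  have hd : v ⬝ᵥ Pi.single j 1 = v j := by simp
  rw [hl, hd, Pi.sub_apply, Pi.smul_apply, smul_eq_mul, Pi.single_apply] at h1
  rw [h1]
  ring

lemma refl_matrix_symm {M : Matrix (Fin n) (Fin n) ℝ} {v : Fin n → ℝ} (h : IsReflWith M v) :
    Mᵀ = M := by
  ext i j
  rw [Matrix.transpose_apply, refl_entries h i j, refl_entries h j i]
  have : (if j = i then (1:ℝ) else 0) = (if i = j then 1 else 0) := by simp [eq_comm]
  rw [this]
  ring

lemma refl_fix_of_orth {M : Matrix (Fin n) (Fin n) ℝ} {v : Fin n → ℝ} (h : IsReflWith M v)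
    (x : Fin n → ℂ) (hx : cv v ⬝ᵥ x = 0) :
    (M.map (fun r : ℝ => (r : ℂ))) *ᵥ x = x := by
  funext i
  show ∑ j, ((M i j : ℝ) : ℂ) * x j = x i
  have hterm : ∀ j, ((M i j : ℝ) : ℂ) * x j
      = (if i = j then 1 else 0) * x j - 2 * (v i : ℂ) / ((v ⬝ᵥ v : ℝ) : ℂ) * ((v j : ℂ) * x j) := by
    intro j
    rw [refl_entries h i j]
    split <;> push_cast <;> ring
  rw [Finset.sum_congr rfl (fun j _ => hterm j), Finset.sum_sub_distrib]
  have h1 : ∑ j, (if i = j then (1:ℂ) else 0) * x j = x i := by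
    simp [ite_mul, Finset.sum_ite_eq]
  have h2 : ∑ j, 2 * (v i : ℂ) / ((v ⬝ᵥ v : ℝ) : ℂ) * ((v j : ℂ) * x j)
      = 2 * (v i : ℂ) / ((v ⬝ᵥ v : ℝ) : ℂ) * (cv v ⬝ᵥ x) := by
    rw [show (cv v ⬝ᵥ x) = ∑ j, (v j : ℂ) * x j from rfl, Finset.mul_sum]
  rw [h1, h2, hx, mul_zero, sub_zero]

lemma refl_normal_prop {M : Matrix (Fin n) (Fin n) ℝ} {v w : Fin n → ℝ}
    (h1 : IsReflWith M v) (h2 : IsReflWith M w) :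
    w = ((v ⬝ᵥ w) / (v ⬝ᵥ v)) • v := by
  have hww : (w ⬝ᵥ w) ≠ 0 := refl_dot_ne h2.1
  have hMw1 : M *ᵥ w = -w := by
    rw [h2.2 w, mul_div_assoc, div_self hww, mul_one]
    funext i
    simp only [Pi.sub_apply, Pi.smul_apply, smul_eq_mul, Pi.neg_apply]
    ring
  have hMw2 := h1.2 w
  funext i
  have e1 := congrFun hMw2 i
  have e2 := congrFun hMw1 i
  rw [e2] at e1
  rw [Pi.sub_apply, Pi.smul_apply, smul_eq_mul] at e1
  rw [Pi.neg_apply] at e1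
  rw [Pi.smul_apply, smul_eq_mul]
  rw [mul_div_assoc] at e1
  set c := (v ⬝ᵥ w) / (v ⬝ᵥ v)
  linarith

lemma conj_refl {v : Fin n → ℝ} (g s : G) (h : IsReflWith (mOf s) v) :
    IsReflWith (mOf (g⁻¹ * s * g)) (mOf g⁻¹ *ᵥ v) := by
  set w := mOf g⁻¹ *ᵥ v with hw
  have hwv : mOf g *ᵥ w = v := by
    rw [hw, Matrix.mulVec_mulVec, mOf_mul_inv, Matrix.one_mulVec]
  have hdot : ∀ y, v ⬝ᵥ (mOf g *ᵥ y) = w ⬝ᵥ y := by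
    intro y
    rw [Matrix.dotProduct_mulVec]
    congr 1
    rw [← Matrix.mulVec_transpose, mOf_transpose]
  have hdot2 : v ⬝ᵥ v = w ⬝ᵥ w := by
    calc v ⬝ᵥ v = v ⬝ᵥ (mOf g *ᵥ w) := by rw [hwv]
      _ = w ⬝ᵥ w := hdot w
  constructor
  · intro h0
    apply h.1
    rw [← hwv, h0, Matrix.mulVec_zero]
  · intro x
    have hms : mOf (g⁻¹ * s * g) = mOf g⁻¹ * mOf s * mOf g := by rw [mOf_mul_s8, mOf_mul_s8]
    rw [hms, ← Matrix.mulVec_mulVec, ← Matrix.mulVec_mulVec, h.2 (mOf g *ᵥ x), hdot x,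
      Matrix.mulVec_sub, Matrix.mulVec_smul, Matrix.mulVec_mulVec, mOf_inv_mul,
      Matrix.one_mulVec, hdot2]
end Lemmas5
section Lemmas6
open MvPolynomial
variable {n : ℕ} {G : Subgroup (OG n)}

lemma eval_linear (w : Fin n → ℂ) (y : Fin n → ℂ) :
    eval y (∑ j, C (w j) * X j : MvPolynomial (Fin n) ℂ) = w ⬝ᵥ y := by
  rw [map_sum]
  exact Finset.sum_congr rfl (fun j _ => by rw [_root_.map_mul, eval_C, eval_X])

lemma orbit_linear_ne (A : Finset G) (α : G → Fin n → ℝ)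
    (hA : ∀ s : G, s ∈ A ↔ ∃ v : Fin n → ℝ, IsReflWith (mOf s) v)
    (hrefl : ∀ s ∈ A, IsReflWith (mOf s) (α s))
    (l : Fin n → ℂ) (hl : ∀ s ∈ A, (fun i => ((α s i : ℝ) : ℂ)) ⬝ᵥ l ≠ 0)
    {s : G} (hs : s ∈ A) (g : G) :
    cv (α s) ⬝ᵥ (cMat g *ᵥ l) ≠ 0 := by
  have hrs := hrefl s hs
  have hconj : IsReflWith (mOf (g⁻¹ * s * g)) (mOf g⁻¹ *ᵥ α s) := conj_refl g s hrs
  set t := g⁻¹ * s * g with ht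
  set w := mOf g⁻¹ *ᵥ α s with hwdef
  have htA : t ∈ A := (hA t).mpr ⟨w, hconj⟩
  have hrt := hrefl t htA
  have hww : w = ((α t ⬝ᵥ w) / (α t ⬝ᵥ α t)) • α t := refl_normal_prop hrt hconj
  have hc0 : (α t ⬝ᵥ w) / (α t ⬝ᵥ α t) ≠ 0 := by
    intro h0
    apply hconj.1
    show w = 0
    rw [hww, h0, zero_smul]
  have key : cv (α s) ⬝ᵥ (cMat g *ᵥ l) = cv w ⬝ᵥ l := by
    rw [Matrix.dotProduct_mulVec]
    congr 1
    rw [← Matrix.mulVec_transpose, cMat_transpose]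
    show (mOf g⁻¹).map (fun r : ℝ => (r : ℂ)) *ᵥ cv (α s) = cv w
    rw [map_mulVec_cv]
  rw [key]
  have hsplit : cv w ⬝ᵥ l = (((α t ⬝ᵥ w) / (α t ⬝ᵥ α t) : ℝ) : ℂ) * (cv (α t) ⬝ᵥ l) := by
    rw [show cv w ⬝ᵥ l = ∑ j, cv w j * l j from rfl,
      show cv (α t) ⬝ᵥ l = ∑ j, cv (α t) j * l j from rfl, Finset.mul_sum]
    refine Finset.sum_congr rfl (fun j _ => ?_)
    rw [show cv w j = ((w j : ℝ) : ℂ) from rfl]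
    conv_lhs => rw [hww]
    rw [Pi.smul_apply, smul_eq_mul]
    rw [show cv (α t) j = ((α t j : ℝ) : ℂ) from rfl]
    push_cast
    ring
  rw [hsplit]
  exact mul_ne_zero (by exact_mod_cast hc0) (hl t htA)
end Lemmas6

open MvPolynomial

/-- For generic `λ`, `I(λ)` is the vanishing ideal of the orbit `Gλ`. -/
theorem Iid_eq_vanishing_ideal_of_orbit
    (n : ℕ) (hn : 1 ≤ n) (G : Subgroup (OG n)) [Fintype G]
    (A : Finset G) (α : G → Fin n → ℝ)
    (hA : ∀ s : G, s ∈ A ↔ ∃ v : Fin n → ℝ, IsReflWith (mOf s) v)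
    (hrefl : ∀ s ∈ A, IsReflWith (mOf s) (α s))
    (hgen : Subgroup.closure (A : Set G) = ⊤)
    (l : Fin n → ℂ) (hl : ∀ s ∈ A, (fun i => ((α s i : ℝ) : ℂ)) ⬝ᵥ l ≠ 0)
    (p : MvPolynomial (Fin n) ℂ) :
    p ∈ Iid n G l ↔ ∀ g : G, MvPolynomial.eval ((cMat g).mulVec l) p = 0 := by
  constructor
  · intro hp g
    have hle : Iid n G l ≤ RingHom.ker (MvPolynomial.eval ((cMat g) *ᵥ l)) := by
      rw [Iid, Ideal.span_le]
      rintro q ⟨hinv, h0⟩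
      simp only [SetLike.mem_coe, RingHom.mem_ker]
      calc eval (cMat g *ᵥ l) q = eval (cMat g *ᵥ l) (actA g q) := by rw [hinv g]
        _ = eval (cMat g⁻¹ *ᵥ (cMat g *ᵥ l)) q := eval_actA g _ q
        _ = eval l q := by rw [Matrix.mulVec_mulVec, cMat_inv_mul, Matrix.one_mulVec]
        _ = 0 := h0
    exact RingHom.mem_ker.mp (hle hp)
  · intro hvan
    have key : ∀ N : ℕ, ∀ q : MvPolynomial (Fin n) ℂ, q.totalDegree ≤ N →
        (∀ g : G, eval (cMat g *ᵥ l) q = 0) → q ∈ Iid n G l := by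
      intro N
      induction N using Nat.strong_induction_on with
      | _ N IH =>
        intro q hdeg hq
        have cardG : ((Fintype.card G : ℕ) : ℂ) ≠ 0 := Nat.cast_ne_zero.mpr Fintype.card_ne_zero
        set Q := ((Fintype.card G : ℕ) : ℂ)⁻¹ • ∑ g : G, actA g q with hQ
        have hQinv : ∀ g' : G, actA g' Q = Q := by
          intro g'
          rw [hQ, _root_.map_smul, map_sum]
          refine congrArg _ ?_
          refine Fintype.sum_equiv (Equiv.mulLeft g') _ _ (fun x => ?_)
          show actA g' (actA x q) = actA ((Equiv.mulLeft g') x) q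
          have hsx : (Equiv.mulLeft g') x = g' * x := rfl
          rw [hsx, actA_mul]
        have hQ0 : eval l Q = 0 := by
          rw [hQ, smul_eq_C_mul, _root_.map_mul, eval_C, map_sum]
          have hz : ∀ g : G, g ∈ (Finset.univ : Finset G) → eval l (actA g q) = 0 := by
            intro g _
            rw [eval_actA]
            exact hq g⁻¹
          rw [Finset.sum_eq_zero hz, mul_zero]
        have hQmem : Q ∈ Iid n G l := by
          rw [Iid]
          exact Ideal.subset_span ⟨hQinv, hQ0⟩
        have hstep : ∀ s ∈ A, q - actA s q ∈ Iid n G l := by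
          intro s hsA
          have hrs := hrefl s hsA
          set r := q - actA s q with hr
          have hvanr : ∀ x : Fin n → ℂ, cv (α s) ⬝ᵥ x = 0 → eval x r = 0 := by
            intro x hx
            rw [hr, map_sub, eval_actA]
            have hcs : cMat s⁻¹ *ᵥ x = x := by
              have hcc : cMat s⁻¹ = cMat s := by
                unfold cMat
                rw [← mOf_transpose, refl_matrix_symm hrs]
              rw [hcc]
              exact refl_fix_of_orth hrs x hx
            rw [hcs, sub_self]
          obtain ⟨i0, hi0⟩ : ∃ i0, α s i0 ≠ 0 := by
            by_contra hc
            push_neg at hc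
            exact hrs.1 (funext hc)
          have hvi0 : cv (α s) i0 ≠ 0 := by
            simp only [cv, ne_eq, Complex.ofReal_eq_zero]
            exact hi0
          obtain ⟨h, hfac, hdeg'⟩ := lin_dvd (cv (α s)) i0 hvi0 r hvanr
          by_cases hr0 : r = 0
          · rw [hr0]
            exact (Iid n G l).zero_mem
          · have hvr : ∀ g : G, eval (cMat g *ᵥ l) r = 0 := by
              intro g
              rw [hr, map_sub, eval_actA, Matrix.mulVec_mulVec, ← cMat_mul, hq g, hq (s⁻¹ * g),
                sub_self]
            have hvh : ∀ g : G, eval (cMat g *ᵥ l) h = 0 := by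
              intro g
              have h2 := hvr g
              rw [hfac, _root_.map_mul] at h2
              rcases mul_eq_zero.mp h2 with he | he
              · exfalso
                rw [eval_linear] at he
                exact orbit_linear_ne A α hA hrefl l hl hsA g he
              · exact he
            have hsq : (actA s q).totalDegree ≤ N := by
              refine le_trans ?_ hdeg
              show (actA s q).totalDegree ≤ q.totalDegree
              rw [actA]
              exact totalDegree_aeval_le _ (fun i => totalDegree_linear_le _) q
            have hdr : r.totalDegree ≤ N := by
              rw [hr]
              exact le_trans (totalDegree_sub _ _) (max_le hdeg hsq)
            have hdh : h.totalDegree < N := lt_of_lt_of_le (hdeg' hr0) hdr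
            have hmem : h ∈ Iid n G l := IH h.totalDegree hdh h le_rfl hvh
            rw [hfac]
            exact Ideal.mul_mem_left _ _ hmem
        have hall : ∀ g : G, q - actA g q ∈ Iid n G l := by
          intro g
          have hg : g ∈ Subgroup.closure (A : Set G) := by
            rw [hgen]; exact Subgroup.mem_top g
          refine Subgroup.closure_induction (p := fun x _ => q - actA x q ∈ Iid n G l)
            (fun x hx => hstep x hx) ?_ ?_ ?_ hg
          · show q - actA (1 : G) q ∈ Iid n G l
            rw [actA_one, sub_self]
            exact (Iid n G l).zero_mem
          · intro x y _ _ px py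
            show q - actA (x * y) q ∈ Iid n G l
            have hxy : q - actA (x * y) q = (q - actA x q) + actA x (q - actA y q) := by
              rw [map_sub, ← actA_mul]; ring
            rw [hxy]
            exact Ideal.add_mem _ px (actA_mem_Iid l x py)
          · intro x _ px
            show q - actA x⁻¹ q ∈ Iid n G l
            have hx' : q - actA x⁻¹ q = - actA x⁻¹ (q - actA x q) := by
              rw [map_sub, ← actA_mul, inv_mul_cancel, actA_one, neg_sub]
            rw [hx']
            exact (Iid n G l).neg_mem (actA_mem_Iid l x⁻¹ px)
        have hsum : q - Q = ((Fintype.card G : ℕ) : ℂ)⁻¹ • ∑ g : G, (q - actA g q) := by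
          rw [hQ, Finset.sum_sub_distrib, smul_sub, Finset.sum_const, Finset.card_univ,
            ← Nat.cast_smul_eq_nsmul ℂ, smul_smul, inv_mul_cancel₀ cardG, one_smul]
        have hmem2 : q - Q ∈ Iid n G l := by
          rw [hsum, smul_eq_C_mul]
          exact Ideal.mul_mem_left _ _ (Ideal.sum_mem _ (fun g _ => hall g))
        have hfin := Ideal.add_mem _ hmem2 hQmem
        rwa [sub_add_cancel] at hfin
    exact key p.totalDegree p le_rfl hvan
end
end
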